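/- arXiv:2604.23634 — 2 statements merged into one kernel-verified Lean document; each statement's English description precedes it below -/
import Mathlib

section
/- Every polymatroid f on a finite set N with f({a}) > 0 admits a decomposition f = g + h into polymatroids such that h does not depend on a and g is a-reduced. -/
def IsPolymatroid {N : Type*} [DecidableEq N] (f : Finset N → ℝ) : Prop :=
  f ∅ = 0 ∧ (∀ A B : Finset N, A ⊆ B → f A ≤ f B) ∧
    (∀ A B : Finset N, f (A ∩ B) + f (A ∪ B) ≤ f A + f B)

def DoesNotDependOn {N : Type*} [DecidableEq N] (h : Finset N → ℝ) (a : N) : Prop :=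
  ∀ A : Finset N, a ∉ A → h (insert a A) = h A

def IsAReduced {N : Type*} [DecidableEq N] (g : Finset N → ℝ) (a : N) : Prop :=
  ∀ g' h' : Finset N → ℝ, IsPolymatroid g' → IsPolymatroid h' →
    (∀ A : Finset N, g A = g' A + h' A) → DoesNotDependOn h' a →
      ∀ A : Finset N, h' A = 0

/-- every polymatroid with f({a}) > 0 decomposes as an a-reduced
part plus a part not depending on a. -/
theorem stmt8 {N : Type*} [DecidableEq N] [Fintype N] (f : Finset N → ℝ)
    (hf : IsPolymatroid f) (a : N) (ha : 0 < f {a}) :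
    ∃ g h : Finset N → ℝ, IsPolymatroid g ∧ IsPolymatroid h ∧
      (∀ A : Finset N, f A = g A + h A) ∧ DoesNotDependOn h a ∧ IsAReduced g a := by
  classical
  obtain ⟨hf0, hfmono, hfsub⟩ := hf
  set S : Set (Finset N → ℝ) :=
    {h | IsPolymatroid h ∧ IsPolymatroid (fun A => f A - h A) ∧ DoesNotDependOn h a}
    with hSdef
  have h0S : (fun _ : Finset N => (0:ℝ)) ∈ S := by
    refine ⟨⟨rfl, fun A B _ => le_rfl, fun A B => by norm_num⟩,
      ⟨by simpa using hf0, fun A B hAB => by simpa using hfmono A B hAB,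
        fun A B => by simpa using hfsub A B⟩, fun A _ => rfl⟩
  have capp : ∀ B : Finset N, Continuous (fun h : Finset N → ℝ => h B) :=
    fun B => continuous_apply B
  have hcl : IsClosed S := by
    rw [hSdef]
    unfold IsPolymatroid DoesNotDependOn
    simp only [Set.setOf_and, Set.setOf_forall]
    refine IsClosed.inter (IsClosed.inter ?_ (IsClosed.inter ?_ ?_))
      (IsClosed.inter (IsClosed.inter ?_ (IsClosed.inter ?_ ?_)) ?_)
    · exact isClosed_eq (capp ∅) continuous_const
    · refine isClosed_iInter fun A => isClosed_iInter fun B => ?_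
      by_cases hAB : A ⊆ B
      · simp only [hAB, forall_true_left]
        exact isClosed_iInter fun _ => isClosed_le (capp A) (capp B)
      · simp [hAB]
    · refine isClosed_iInter fun A => isClosed_iInter fun B => ?_
      exact isClosed_le ((capp (A ∩ B)).add (capp (A ∪ B)))
        ((capp A).add (capp B))
    · exact isClosed_eq (continuous_const.sub (capp ∅)) continuous_const
    · refine isClosed_iInter fun A => isClosed_iInter fun B => ?_
      by_cases hAB : A ⊆ B
      · simp only [hAB, forall_true_left]
        exact isClosed_iInter fun _ => isClosed_le (continuous_const.sub (capp A))
          (continuous_const.sub (capp B))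
      · simp [hAB]
    · refine isClosed_iInter fun A => isClosed_iInter fun B => ?_
      exact isClosed_le ((continuous_const.sub (capp (A ∩ B))).add
          (continuous_const.sub (capp (A ∪ B))))
        ((continuous_const.sub (capp A)).add
          (continuous_const.sub (capp B)))
    · refine isClosed_iInter fun A => ?_
      by_cases hA : a ∉ A
      · simp only [hA, forall_true_left]
        exact isClosed_iInter fun _ => isClosed_eq (capp (insert a A)) (capp A)
      · simp [hA]
  have hsub : S ⊆ Set.pi Set.univ (fun _ : Finset N => Set.Icc (0:ℝ) (f Finset.univ)) := by
    intro h hh A _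
    obtain ⟨⟨h0, hmono, _⟩, ⟨g0, gmono, _⟩, _⟩ := hh
    have h1 := hmono ∅ A (Finset.empty_subset A)
    have h2 := gmono ∅ A (Finset.empty_subset A)
    have h3 := hfmono A Finset.univ (Finset.subset_univ A)
    rw [h0] at h1
    simp only at h2
    constructor
    · exact h1
    · have : h ∅ = 0 := h0
      nlinarith [h2, h3, hf0, this]
  have hcomp : IsCompact S :=
    IsCompact.of_isClosed_subset (isCompact_univ_pi fun _ => isCompact_Icc) hcl hsub
  have hcont : Continuous (fun h : Finset N → ℝ => ∑ A : Finset N, h A) :=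
    continuous_finset_sum Finset.univ fun A _ => capp A
  obtain ⟨h, hhS, hmax⟩ := hcomp.exists_isMaxOn ⟨_, h0S⟩ hcont.continuousOn
  obtain ⟨⟨hh0, hhmono, hhsub⟩, hg, hdep⟩ := hhS
  refine ⟨fun A => f A - h A, h, hg, ⟨hh0, hhmono, hhsub⟩, fun A => by ring, hdep, ?_⟩
  intro g' h' hg' hh' heq hdep' A
  have hmem : (fun B => h B + h' B) ∈ S := by
    refine ⟨⟨?_, ?_, ?_⟩, ?_, ?_⟩
    · simp [hh0, hh'.1]
    · intro A B hAB; exact add_le_add (hhmono A B hAB) (hh'.2.1 A B hAB)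
    · intro A B
      have t1 := hhsub A B
      have t2 := hh'.2.2 A B
      dsimp only
      linarith
    · have hgeq : (fun B => f B - (h B + h' B)) = g' := funext fun B => by
        have := heq B; dsimp only at this ⊢; linarith
      rw [hgeq]; exact hg'
    · intro B hB
      dsimp only
      rw [hdep B hB, hdep' B hB]
  have hle : ∑ B : Finset N, (h B + h' B) ≤ ∑ B : Finset N, h B :=
    isMaxOn_iff.mp hmax _ hmem
  have hsum : ∑ B : Finset N, h' B ≤ 0 := by
    rw [Finset.sum_add_distrib] at hle; linarith
  have hnn : ∀ B : Finset N, 0 ≤ h' B := fun B => by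
    have := hh'.2.1 ∅ B (Finset.empty_subset B)
    rw [hh'.1] at this; exact this
  have hzero : ∑ B : Finset N, h' B = 0 :=
    le_antisymm hsum (Finset.sum_nonneg fun B _ => hnn B)
  exact (Finset.sum_eq_zero_iff_of_nonneg fun B _ => hnn B).mp hzero A (Finset.mem_univ A)
end

section
/- In the bit-construction, for every J ⊆ {1,...,k}, the bit r is independent of the joint distribution of the variables at X_J = {x_j : j ∈ J} together with all variables y_K with K∖J ≠ ∅; equivalently, the entropy polymatroid satisfies f({a} ∪ A) = f(A) + 1 where A = X_J ∪ {y_K : K∖J ≠ ∅}. -/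
/-- Probability that `Z` takes value `v` w.r.t. weights `p`. -/
noncomputable def probOf {Ω : Type*} [Fintype Ω] (p : Ω → ℝ) {γ : Type*}
    [DecidableEq γ] (Z : Ω → γ) (v : γ) : ℝ :=
  ∑ ω ∈ Finset.univ.filter (fun ω => Z ω = v), p ω

/-- Shannon entropy (base 2) of a random variable on a finite sample space. -/
noncomputable def shannonEntropy {Ω : Type*} [Fintype Ω] (p : Ω → ℝ) {γ : Type*}
    [DecidableEq γ] (Z : Ω → γ) : ℝ :=
  - ∑ v ∈ Finset.univ.image Z, probOf p Z v * Real.logb 2 (probOf p Z v)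

/-- Ground set: a ⊎ {x_i : i ∈ Fin k} ⊎ {y_K : K ⊆ Fin k}. -/
abbrev GS (k : ℕ) := Unit ⊕ Fin k ⊕ Finset (Fin k)

def theA (k : ℕ) : GS k := Sum.inl ()
def theX {k : ℕ} (i : Fin k) : GS k := Sum.inr (Sum.inl i)
def theY {k : ℕ} (K : Finset (Fin k)) : GS k := Sum.inr (Sum.inr K)

/-- Sample space: the bit r together with the bits r⁽ⁱ⁾_J (indexed, harmlessly,
by all J; each x_i only reads those with J ⊆ {j < i}). All coordinates are
independent uniform bits under the uniform distribution on this space. -/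
abbrev Bits (k : ℕ) := ZMod 2 × (Fin k → Finset (Fin k) → ZMod 2)

/-- Value type carried by each element of the ground set: `a` and the `y_K`
carry a single bit; `x_i` carries the 2^{i-1} bits r⁽ⁱ⁾_J, J ⊆ {j < i}. -/
def Val (k : ℕ) : GS k → Type
  | Sum.inl _ => ZMod 2
  | Sum.inr (Sum.inl i) =>
      ({J : Finset (Fin k) // J ⊆ Finset.univ.filter (fun j => j < i)} → ZMod 2)
  | Sum.inr (Sum.inr _) => ZMod 2

instance (k : ℕ) (e : GS k) : DecidableEq (Val k e) := by
  rcases e with u | i | K <;> dsimp [Val] <;> infer_instance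

/-- The random variable carried by each element: a ↦ r, x_i ↦ (r⁽ⁱ⁾_J)_{J ⊆ {j<i}},
y_K ↦ r + Σ_{j∈K} r⁽ʲ⁾_{K∩{t<j}} (mod 2). -/
def bitVar (k : ℕ) : ∀ e : GS k, Bits k → Val k e
  | Sum.inl _ => fun ω => ω.1
  | Sum.inr (Sum.inl i) => fun ω J => ω.2 i J.val
  | Sum.inr (Sum.inr K) => fun ω => ω.1 + ∑ j ∈ K, ω.2 j (K.filter (fun t => t < j))

/-- The entropy polymatroid of the bit construction (uniform distribution). -/
noncomputable def entPoly (k : ℕ) (A : Finset (GS k)) : ℝ :=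
  shannonEntropy (fun _ : Bits k => ((Fintype.card (Bits k) : ℝ))⁻¹)
    (fun ω => fun e : {e // e ∈ A} => bitVar k e.val ω)


lemma probOf_const {Ω : Type*} [Fintype Ω] (c : ℝ) {γ : Type*} [DecidableEq γ]
    (Z : Ω → γ) (v : γ) :
    probOf (fun _ => c) Z v = (Finset.univ.filter (fun ω => Z ω = v)).card * c := by
  simp [probOf, mul_comm]

lemma entropy_comp_inj {Ω : Type*} [Fintype Ω] {γ δ : Type*} [DecidableEq γ]
    [DecidableEq δ] (p : Ω → ℝ) (Z : Ω → γ) (g : γ → δ) (hg : Function.Injective g) :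
    shannonEntropy p (fun ω => g (Z ω)) = shannonEntropy p Z := by
  have himg : (Finset.univ.image (fun ω => g (Z ω))) = (Finset.univ.image Z).image g := by
    rw [Finset.image_image]; rfl
  have hprob : ∀ v : γ, probOf p (fun ω => g (Z ω)) (g v) = probOf p Z v := by
    intro v
    unfold probOf
    congr 1
    apply Finset.filter_congr
    intro ω _
    simp [hg.eq_iff]
  unfold shannonEntropy
  rw [himg, Finset.sum_image (fun a _ b _ h => hg h)]
  simp_rw [hprob]

lemma zmod2_cases : ∀ a b : ZMod 2, a = b ∨ a = b + 1 := by decide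

lemma zmod2_add11 : ∀ a : ZMod 2, a + 1 + 1 = a := by decide

lemma entropy_pair_bit {Ω : Type*} [Fintype Ω] [Nonempty Ω] {γ : Type*} [DecidableEq γ]
    (Z : Ω → γ) (R : Ω → ZMod 2) (σ : Ω → Ω) (hσ : Function.Involutive σ)
    (hZ : ∀ ω, Z (σ ω) = Z ω) (hR : ∀ ω, R (σ ω) = R ω + 1) :
    shannonEntropy (fun _ : Ω => ((Fintype.card Ω : ℝ))⁻¹) (fun ω => (R ω, Z ω)) =
      shannonEntropy (fun _ : Ω => ((Fintype.card Ω : ℝ))⁻¹) Z + 1 := by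
  classical
  set c : ℝ := ((Fintype.card Ω : ℝ))⁻¹ with hc_def
  have hcard : (0 : ℕ) < Fintype.card Ω := Fintype.card_pos
  have hc : 0 < c := by
    rw [hc_def]; positivity
  set W : Ω → ZMod 2 × γ := fun ω => (R ω, Z ω) with hW
  -- fiber cardinalities
  have hfib : ∀ (v : ZMod 2) (w : γ),
      (Finset.univ.filter (fun ω => W ω = (v, w))).card * 2 =
        (Finset.univ.filter (fun ω => Z ω = w)).card := by
    intro v w
    have hbij : (Finset.univ.filter (fun ω => W ω = (v, w))).card =
        (Finset.univ.filter (fun ω => W ω = (v + 1, w))).card := by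
      apply Finset.card_bij (fun ω _ => σ ω)
      · intro ω hω
        simp only [Finset.mem_filter, Finset.mem_univ, true_and, hW, Prod.mk.injEq] at hω ⊢
        exact ⟨by rw [hR, hω.1], by rw [hZ, hω.2]⟩
      · intro a ha b hb h
        have := congrArg σ h
        rwa [hσ, hσ] at this
      · intro b hb
        refine ⟨σ b, ?_, hσ b⟩
        simp only [Finset.mem_filter, Finset.mem_univ, true_and, hW, Prod.mk.injEq] at hb ⊢
        exact ⟨by rw [hR, hb.1, zmod2_add11], by rw [hZ, hb.2]⟩
    have hsplit : (Finset.univ.filter (fun ω => Z ω = w)) =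
        (Finset.univ.filter (fun ω => W ω = (v, w))) ∪
          (Finset.univ.filter (fun ω => W ω = (v + 1, w))) := by
      ext ω
      simp only [Finset.mem_filter, Finset.mem_union, Finset.mem_univ, true_and, hW,
        Prod.mk.injEq]
      constructor
      · intro h
        rcases zmod2_cases (R ω) v with h1 | h1
        · exact Or.inl ⟨h1, h⟩
        · exact Or.inr ⟨h1, h⟩
      · rintro (⟨_, h⟩ | ⟨_, h⟩) <;> exact h
    have hdisj : Disjoint (Finset.univ.filter (fun ω => W ω = (v, w)))
        (Finset.univ.filter (fun ω => W ω = (v + 1, w))) := by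
      rw [Finset.disjoint_filter]
      intro ω _ h1 h2
      rw [h1] at h2
      have : v = v + 1 := (Prod.mk.injEq _ _ _ _).mp h2 |>.1
      simp at this
    rw [hsplit, Finset.card_union_of_disjoint hdisj, ← hbij]
    ring
  have hprobW : ∀ (v : ZMod 2) (w : γ),
      probOf (fun _ : Ω => c) W (v, w) = probOf (fun _ : Ω => c) Z w / 2 := by
    intro v w
    rw [probOf_const, probOf_const, ← hfib v w]
    push_cast
    ring
  -- image of W
  have himg : Finset.univ.image W = (Finset.univ : Finset (ZMod 2)) ×ˢ Finset.univ.image Z := by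
    ext ⟨v, w⟩
    simp only [Finset.mem_image, Finset.mem_product, Finset.mem_univ, true_and, hW,
      Prod.mk.injEq]
    constructor
    · rintro ⟨ω, h1, h2⟩
      exact ⟨ω, h2⟩
    · rintro ⟨ω, h2⟩
      rcases zmod2_cases (R ω) v with h1 | h1
      · exact ⟨ω, h1, h2⟩
      · refine ⟨σ ω, ?_, by rw [hZ]; exact h2⟩
        rw [hR, h1, zmod2_add11]
    -- total mass
  have htot : ∑ w ∈ Finset.univ.image Z, probOf (fun _ : Ω => c) Z w = 1 := by
    have := Finset.card_eq_sum_card_fiberwise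
      (f := Z) (s := (Finset.univ : Finset Ω)) (t := Finset.univ.image Z)
      (fun x _ => Finset.mem_image_of_mem Z (Finset.mem_univ x))
    simp_rw [probOf_const, ← Finset.sum_mul, ← Nat.cast_sum, ← this]
    rw [Finset.card_univ, hc_def]
    field_simp
  have hpos : ∀ w ∈ Finset.univ.image Z, 0 < probOf (fun _ : Ω => c) Z w := by
    intro w hw
    rw [probOf_const]
    rcases Finset.mem_image.mp hw with ⟨ω, _, hω⟩
    have : 0 < (Finset.univ.filter (fun ω => Z ω = w)).card := by
      apply Finset.card_pos.mpr
      exact ⟨ω, Finset.mem_filter.mpr ⟨Finset.mem_univ _, hω⟩⟩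
    positivity
  -- compute
  unfold shannonEntropy
  rw [himg, Finset.sum_product]
  have hinner : ∀ v : ZMod 2,
      ∑ w ∈ Finset.univ.image Z,
        probOf (fun _ : Ω => c) W (v, w) * Real.logb 2 (probOf (fun _ : Ω => c) W (v, w)) =
      (∑ w ∈ Finset.univ.image Z,
        probOf (fun _ : Ω => c) Z w * Real.logb 2 (probOf (fun _ : Ω => c) Z w)) / 2 - 1 / 2 := by
    intro v
    have step : ∀ w ∈ Finset.univ.image Z,
        probOf (fun _ : Ω => c) W (v, w) * Real.logb 2 (probOf (fun _ : Ω => c) W (v, w)) =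
        probOf (fun _ : Ω => c) Z w * Real.logb 2 (probOf (fun _ : Ω => c) Z w) / 2
          - probOf (fun _ : Ω => c) Z w / 2 := by
      intro w hw
      rw [hprobW]
      have hq := hpos w hw
      rw [Real.logb_div hq.ne' two_ne_zero,
        Real.logb_self_eq_one (by norm_num : (1:ℝ) < 2)]
      ring
    rw [Finset.sum_congr rfl step, Finset.sum_sub_distrib, ← Finset.sum_div, ← Finset.sum_div,
      htot]
  rw [Finset.sum_congr rfl (fun v _ => hinner v), Finset.sum_const]
  have : (Finset.univ : Finset (ZMod 2)).card = 2 := by decide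
  rw [this]
  ring


/-- for every J ⊆ {1,…,k}, the bit r is independent of the joint
distribution of X_J together with all y_K with K∖J ≠ ∅: in terms of the entropy
polymatroid, f({a} ∪ A) = f(A) + 1 where A = X_J ∪ {y_K : K∖J ≠ ∅}. -/
theorem stmt19 (k : ℕ) (J : Finset (Fin k)) :
    entPoly k (insert (theA k)
        (J.image (theX (k := k)) ∪
          (Finset.univ.filter (fun K : Finset (Fin k) => (K \ J).Nonempty)).image
            (theY (k := k)))) =
      entPoly k
        (J.image (theX (k := k)) ∪
          (Finset.univ.filter (fun K : Finset (Fin k) => (K \ J).Nonempty)).image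
            (theY (k := k))) + 1 := by
  classical
  set A : Finset (GS k) :=
    (J.image (theX (k := k)) ∪
      (Finset.univ.filter (fun K : Finset (Fin k) => (K \ J).Nonempty)).image (theY (k := k)))
    with hA
  set p : Bits k → ℝ := fun _ => ((Fintype.card (Bits k) : ℝ))⁻¹ with hp
  set Z : Bits k → ((e : {e // e ∈ A}) → Val k e.val) :=
    fun ω => fun e => bitVar k e.val ω with hZdef
  set R : Bits k → ZMod 2 := fun ω => ω.1 with hRdef
  -- the injection from the joint variable on `insert a A` to the pair
  let g : ((e : {e // e ∈ insert (theA k) A}) → Val k e.val) →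
      ZMod 2 × ((e : {e // e ∈ A}) → Val k e.val) :=
    fun F => (F ⟨theA k, Finset.mem_insert_self _ _⟩,
      fun e => F ⟨e.val, Finset.mem_insert_of_mem e.2⟩)
  have hg : Function.Injective g := by
    intro F1 F2 h
    funext e
    obtain ⟨e, he⟩ := e
    rcases Finset.mem_insert.mp he with rfl | he'
    · exact congrArg Prod.fst h
    · exact congrFun (congrArg Prod.snd h) ⟨e, he'⟩
  have h1 : shannonEntropy p (fun ω => (R ω, Z ω)) = entPoly k (insert (theA k) A) :=
    entropy_comp_inj p
      (fun ω => fun e : {e // e ∈ insert (theA k) A} => bitVar k e.val ω) g hg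
  -- the compensating involution
  set σ : Bits k → Bits k := fun ω =>
    (ω.1 + 1, fun j L => ω.2 j L + if j ∉ J ∧ L ⊆ J then 1 else 0) with hσdef
  have hzadd : ∀ a t : ZMod 2, a + t + t = a := by decide
  have hσ : Function.Involutive σ := by
    intro ω
    have h1 : (σ (σ ω)).1 = ω.1 := zmod2_add11 _
    have h2 : (σ (σ ω)).2 = ω.2 := by
      funext j L
      exact hzadd _ _
    exact Prod.ext h1 h2
  have hR : ∀ ω, R (σ ω) = R ω + 1 := fun ω => rfl
  have hZσ : ∀ ω, Z (σ ω) = Z ω := by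
    intro ω
    funext e
    obtain ⟨e, he⟩ := e
    rw [hA] at he
    rcases Finset.mem_union.mp he with hx | hy
    · obtain ⟨i, hi, rfl⟩ := Finset.mem_image.mp hx
      funext L
      show (σ ω).2 i L.val = ω.2 i L.val
      simp [hσdef, hi]
    · obtain ⟨K, hKmem, rfl⟩ := Finset.mem_image.mp hy
      have hK : (K \ J).Nonempty := (Finset.mem_filter.mp hKmem).2
      -- the unique minimal element of K \ J
      set j0 := (K \ J).min' hK with hj0
      have hj0mem' : j0 ∈ K \ J := Finset.min'_mem _ hK
      rw [Finset.mem_sdiff] at hj0mem'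
      have hfilter : K.filter (fun j => j ∉ J ∧ K.filter (fun t => t < j) ⊆ J) = {j0} := by
        apply Finset.eq_singleton_iff_unique_mem.mpr
        constructor
        · rw [Finset.mem_filter]
          refine ⟨hj0mem'.1, hj0mem'.2, ?_⟩
          intro t ht
          rw [Finset.mem_filter] at ht
          by_contra htJ
          have : j0 ≤ t := Finset.min'_le _ _ (Finset.mem_sdiff.mpr ⟨ht.1, htJ⟩)
          exact absurd ht.2 (not_lt.mpr this)
        · intro j hj
          rw [Finset.mem_filter] at hj
          obtain ⟨hjK, hjJ, hsub⟩ := hj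
          have h0 : j0 ≤ j := Finset.min'_le _ _ (Finset.mem_sdiff.mpr ⟨hjK, hjJ⟩)
          rcases lt_or_eq_of_le h0 with hlt | heq
          · exact absurd (hsub (Finset.mem_filter.mpr ⟨hj0mem'.1, hlt⟩)) hj0mem'.2
          · exact heq.symm
      have hkey : (∑ j ∈ K, if j ∉ J ∧ K.filter (fun t => t < j) ⊆ J
          then (1 : ZMod 2) else 0) = 1 := by
        rw [← Finset.sum_filter, hfilter, Finset.sum_singleton]
      show (σ ω).1 + ∑ j ∈ K, (σ ω).2 j (K.filter (fun t => t < j)) =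
        ω.1 + ∑ j ∈ K, ω.2 j (K.filter (fun t => t < j))
      have hexp : ∀ j, (σ ω).2 j (K.filter (fun t => t < j)) =
          ω.2 j (K.filter (fun t => t < j)) +
            if j ∉ J ∧ K.filter (fun t => t < j) ⊆ J then (1 : ZMod 2) else 0 := fun j => rfl
      rw [Finset.sum_congr rfl (fun j _ => hexp j), Finset.sum_add_distrib, hkey]
      show ω.1 + 1 + (_ + 1) = _
      have : ∀ a s : ZMod 2, a + 1 + (s + 1) = a + s := by decide
      exact this _ _
  have h2 := entropy_pair_bit (Ω := Bits k) Z R σ hσ hZσ hR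
  rw [← h1, h2]
  rfl
end
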